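/- Let W₁, W₀ ∈ ℂ^{d×d} and for each s ∈ ℂ let Ψ^s be the fundamental solution. Then there exist constants c₂, c₃ ≥ 0 such that for every s ∈ ℂ: |det(W₁·𝓗(1)·Ψ^s(1) + W₀·𝓗(0))| ≤ c₂·e^{c₃·|Re s|}. In particular, the function g(s) := det(W₁·𝓗(1)·Ψ^s(1) + W₀·𝓗(0)) grows at most exponentially in |Re s| and is bounded on every line parallel to the imaginary axis. (Exponential-type bound for g in the proof of Theorem 2.7, implication 2)⇒1).) -/

import Mathlib

open Matrix Set
open scoped ComplexOrder

/-- `x : ℝ → ℂ^d` is a classical solution of the port-Hamiltonian eigenvalue ODE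
`s·x(ζ) = P₁·(𝓗x)'(ζ) + P₀·(𝓗x)(ζ)` on `[0,1]`: the map `u := 𝓗·x` is continuously
differentiable on `[0,1]` and the equation holds there. -/
def IsClassicalSolution {d : ℕ} (P₁ P₀ : Matrix (Fin d) (Fin d) ℂ)
    (𝓗 : ℝ → Matrix (Fin d) (Fin d) ℂ) (s : ℂ)
    (x : ℝ → EuclideanSpace ℂ (Fin d)) : Prop :=
  ∃ u' : ℝ → EuclideanSpace ℂ (Fin d),
    ContinuousOn u' (Set.Icc 0 1) ∧
    (∀ ζ ∈ Set.Icc (0:ℝ) 1,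
      HasDerivWithinAt (fun t => Matrix.toEuclideanLin (𝓗 t) (x t)) (u' ζ) (Set.Icc 0 1) ζ) ∧
    (∀ ζ ∈ Set.Icc (0:ℝ) 1,
      s • x ζ = Matrix.toEuclideanLin P₁ (u' ζ)
        + Matrix.toEuclideanLin P₀ (Matrix.toEuclideanLin (𝓗 ζ) (x ζ)))

/-!
Along the fundamental solution, `u = 𝓗 Ψˢ v` satisfies `u' = s P₁⁻¹ 𝓗⁻¹ u - P₁⁻¹ P₀ u`.
Taking the Hermitian conjugate of `P₁ 𝓗 = R Δ S` gives `Rᴴ P₁⁻¹ 𝓗⁻¹ Sᴴ = Δ⁻¹`, so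
`w = Rᴴ u` solves `w' = s Δ⁻¹ w + B w`, where `B` is continuous and does not depend on `s`
(unlike `S 𝓗⁻¹ u`, this choice needs derivatives of `R` only, not of `𝓗`). As `Δ⁻¹` is Hermitian,
`Re ⟪w, s Δ⁻¹ w⟫ ≤ |Re s| ‖Δ⁻¹‖ ‖w‖²`, and Grönwall's inequality for `‖w‖²` bounds the operator
norm of `𝓗(1) Ψˢ(1)` by `C e^{M |Re s|}`. Finally `|det A| ≤ d! ‖A‖^d`.
-/

open Real
open scoped Nat

theorem norm_le_mul_exp_of_real_inner_deriv_le {F : Type*} [NormedAddCommGroup F]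
    [InnerProductSpace ℝ F] {w w' : ℝ → F} {a b L : ℝ} (hab : a ≤ b)
    (hw : ∀ t ∈ Icc a b, HasDerivWithinAt w (w' t) (Icc a b) t)
    (hL : ∀ t ∈ Icc a b, inner ℝ (w t) (w' t) ≤ L * ‖w t‖ ^ 2) :
    ‖w b‖ ≤ ‖w a‖ * exp (L * (b - a)) := by
  have hE (t) (ht : t ∈ Icc a b) :
      HasDerivWithinAt (‖w ·‖ ^ 2) (2 * inner ℝ (w t) (w' t)) (Icc a b) t :=
    (hw t ht).norm_sq
  have hsq := le_gronwallBound_of_liminf_deriv_right_le (ε := 0) (K := 2 * L)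
    (fun t ht => (hE t ht).continuousWithinAt)
    (fun t ht _ hr => ((hE t (Ico_subset_Icc_self ht)).mono_of_mem_nhdsWithin
      (Icc_mem_nhdsGE_of_mem ht)).liminf_right_slope_le hr)
    le_rfl (fun t ht => by linarith [hL t (Ico_subset_Icc_self ht)]) b ⟨hab, le_rfl⟩
  rw [gronwallBound_ε0] at hsq
  refine (pow_le_pow_iff_left₀ (norm_nonneg _) (by positivity) two_ne_zero).1 (hsq.trans_eq ?_)
  rw [mul_pow, ← exp_nat_mul]
  ring_nf

theorem IsSelfAdjoint.re_inner_smul_apply_le {𝕜 E : Type*} [RCLike 𝕜] [NormedAddCommGroup E]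
    [InnerProductSpace 𝕜 E] [CompleteSpace E] {T : E →L[𝕜] E} (hT : IsSelfAdjoint T) (s : 𝕜)
    (x : E) : RCLike.re (inner 𝕜 x (s • T x)) ≤ |RCLike.re s| * ‖T‖ * ‖x‖ ^ 2 := by
  have hreal : (RCLike.re (inner 𝕜 x (T x)) : 𝕜) = inner 𝕜 x (T x) :=
    hT.isSymmetric.coe_re_inner_self_apply x
  rw [inner_smul_right, ← hreal, RCLike.re_mul_ofReal]
  calc RCLike.re s * RCLike.re (inner 𝕜 x (T x))
      ≤ |RCLike.re s| * ‖inner 𝕜 x (T x)‖ := by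
        grw [← RCLike.abs_re_le_norm, ← abs_mul]
        exact le_abs_self _
    _ ≤ |RCLike.re s| * (‖x‖ * (‖T‖ * ‖x‖)) := by grw [norm_inner_le_norm, T.le_opNorm]
    _ = _ := by ring

theorem norm_le_mul_exp_of_hasDerivWithinAt_smul_add {E : Type*} [NormedAddCommGroup E]
    [InnerProductSpace ℂ E] [CompleteSpace E] {w : ℝ → E} {D B : ℝ → E →L[ℂ] E} {s : ℂ}
    {a b M K : ℝ} (hab : a ≤ b)
    (hw : ∀ t ∈ Icc a b, HasDerivWithinAt w (s • D t (w t) + B t (w t)) (Icc a b) t)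
    (hD : ∀ t ∈ Icc a b, IsSelfAdjoint (D t)) (hDM : ∀ t ∈ Icc a b, ‖D t‖ ≤ M)
    (hBK : ∀ t ∈ Icc a b, ‖B t‖ ≤ K) :
    ‖w b‖ ≤ ‖w a‖ * exp ((|s.re| * M + K) * (b - a)) := by
  let _ : InnerProductSpace ℝ E := InnerProductSpace.complexToReal
  refine norm_le_mul_exp_of_real_inner_deriv_le hab hw fun t ht => ?_
  rw [real_inner_eq_re_inner ℂ, inner_add_right, map_add]
  calc _ ≤ |s.re| * ‖D t‖ * ‖w t‖ ^ 2 + ‖B t‖ * ‖w t‖ ^ 2 := by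
        gcongr
        · exact (hD t ht).re_inner_smul_apply_le s (w t)
        · grw [re_inner_le_norm, (B t).le_opNorm, pow_two, mul_left_comm]
    _ = (|s.re| * ‖D t‖ + ‖B t‖) * ‖w t‖ ^ 2 := by ring
    _ ≤ (|s.re| * M + K) * ‖w t‖ ^ 2 := by grw [hDM t ht, hBK t ht]

theorem ContinuousOn.matrix_inv {X n 𝕜 : Type*} [TopologicalSpace X] [Fintype n]
    [DecidableEq n] [Field 𝕜] [TopologicalSpace 𝕜] [IsTopologicalRing 𝕜] [ContinuousInv₀ 𝕜]
    {A : X → Matrix n n 𝕜} {s : Set X} (hA : ContinuousOn A s)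
    (hdet : ∀ x ∈ s, (A x).det ≠ 0) : ContinuousOn (fun x => (A x)⁻¹) s := fun x hx =>
  (continuousAt_matrix_inv _ (by rw [Ring.inverse_eq_inv']; exact continuousAt_inv₀ (hdet x hx)))
    |>.comp_continuousWithinAt (hA x hx)

theorem ContinuousLinearMap.apply_add_apply_eq_smul_add {𝕜 E : Type*} [RCLike 𝕜]
    [NormedAddCommGroup E] [NormedSpace 𝕜 E] {r r' g f p : E →L[𝕜] E} {s : 𝕜} {u u' : E}
    (hpr : p * r = 1) (hu' : u' = s • g u - f u) :
    r' u + r u' = s • (r * g * p) (r u) + (r' * p - r * f * p) (r u) := by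
  have hu : p (r u) = u := by rw [← mul_apply_eq_comp, hpr, one_apply_eq_self]
  simp only [mul_apply_eq_comp, _root_.sub_apply, hu, hu', map_sub, map_smul]
  abel

namespace Matrix

theorem IsDiag.isHermitian_of_im_eq_zero {m : Type*} {A : Matrix m m ℂ} (hA : A.IsDiag)
    (him : ∀ i, (A i i).im = 0) : A.IsHermitian := by
  ext i j
  rcases eq_or_ne i j with rfl | hij
  · exact Complex.conj_eq_iff_im.2 (him i)
  · simp [hA hij, hA hij.symm]

variable {n : Type*} [Fintype n] [DecidableEq n]

theorem conjTranspose_mul_inv_mul_inv_mul_conjTranspose {α : Type*} [CommRing α] [StarRing α]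
    {A H R D S : Matrix n n α} (hA : A.IsHermitian) (hH : H.IsHermitian) (hD : D.IsHermitian)
    (hRS : R * S = 1) (hSR : S * R = 1) (h : A * H = R * D * S) :
    Rᴴ * (A⁻¹ * H⁻¹) * Sᴴ = D⁻¹ := by
  have hinv : H⁻¹ * A⁻¹ = R * D⁻¹ * S := by
    rw [← mul_inv_rev, h, mul_inv_rev, mul_inv_rev, inv_eq_left_inv hRS, inv_eq_left_inv hSR,
      mul_assoc]
  have hinv' : A⁻¹ * H⁻¹ = Sᴴ * D⁻¹ * Rᴴ := by
    simpa [conjTranspose_nonsing_inv, hA.eq, hH.eq, hD.inv.eq, mul_assoc] using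
      congrArg conjTranspose hinv
  rw [hinv', ← mul_assoc, ← mul_assoc, ← conjTranspose_mul, hSR, mul_assoc,
    ← conjTranspose_mul, hSR]
  simp

variable {𝕜 : Type*} [RCLike 𝕜]

theorem toEuclideanCLM_eq_sum (A : Matrix n n 𝕜) :
    toEuclideanCLM (n := n) (𝕜 := 𝕜) A =
      ∑ i, ∑ j, A i j • toEuclideanCLM (n := n) (𝕜 := 𝕜) (single i j 1) := by
  conv_lhs => rw [matrix_eq_sum_single A]
  simp only [map_sum, ← map_smul, smul_single, smul_eq_mul, mul_one]

theorem hasDerivWithinAt_toEuclideanCLM_apply {A : ℝ → Matrix n n 𝕜} {A' : Matrix n n 𝕜}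
    {u : ℝ → EuclideanSpace 𝕜 n} {u' : EuclideanSpace 𝕜 n} {s : Set ℝ} {t : ℝ}
    (hA : ∀ i j, HasDerivWithinAt (fun τ => A τ i j) (A' i j) s t)
    (hu : HasDerivWithinAt u u' s t) :
    HasDerivWithinAt (fun τ => toEuclideanCLM (n := n) (𝕜 := 𝕜) (A τ) (u τ))
      (toEuclideanCLM (n := n) (𝕜 := 𝕜) A' (u t) + toEuclideanCLM (n := n) (𝕜 := 𝕜) (A t) u')
      s t := by
  set L := fun i j => toEuclideanCLM (n := n) (𝕜 := 𝕜) (single i j 1)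
  have h : HasDerivWithinAt (fun τ => ∑ i, ∑ j, A τ i j • L i j (u τ))
      (∑ i, ∑ j, (A t i j • L i j u' + A' i j • L i j (u t))) s t :=
    HasDerivWithinAt.fun_sum fun i _ => HasDerivWithinAt.fun_sum fun j _ =>
      (hA i j).smul (((L i j).restrictScalars ℝ).hasFDerivAt.comp_hasDerivWithinAt t hu)
  convert h using 1
  · ext1 τ
    simp [toEuclideanCLM_eq_sum (A τ), L]
  · simp [toEuclideanCLM_eq_sum A', toEuclideanCLM_eq_sum (A t), Finset.sum_add_distrib,
      add_comm, L]

theorem continuous_toEuclideanCLM : Continuous (toEuclideanCLM (n := n) (𝕜 := 𝕜)) :=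
  LinearMap.continuous_of_finiteDimensional
    (toEuclideanCLM (n := n) (𝕜 := 𝕜)).toAlgEquiv.toLinearMap

theorem norm_apply_le_norm_toEuclideanCLM (A : Matrix n n 𝕜) (i j : n) :
    ‖A i j‖ ≤ ‖toEuclideanCLM (n := n) (𝕜 := 𝕜) A‖ := by
  have h := (toEuclideanCLM (n := n) (𝕜 := 𝕜) A).le_opNorm (EuclideanSpace.single j 1)
  rw [PiLp.norm_single, norm_one, mul_one] at h
  refine le_trans (le_of_eq ?_) ((PiLp.norm_apply_le _ i).trans h)
  simp [mulVec_single]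

theorem norm_det_le_factorial_mul_norm_toEuclideanCLM_pow (A : Matrix n n 𝕜) :
    ‖A.det‖ ≤ (Fintype.card n)! * ‖toEuclideanCLM (n := n) (𝕜 := 𝕜) A‖ ^ Fintype.card n := by
  simpa [nsmul_eq_mul] using
    det_le (abv := IsAbsoluteValue.toAbsoluteValue (norm : 𝕜 → ℝ))
      (norm_apply_le_norm_toEuclideanCLM A)

theorem toEuclideanCLM_apply_eq_smul_sub {P₁ P₀ H : Matrix n n 𝕜} (hP₁ : IsUnit P₁)
    (hH : IsUnit H) {s : 𝕜} {x u' : EuclideanSpace 𝕜 n}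
    (h : s • x = toEuclideanCLM (n := n) (𝕜 := 𝕜) P₁ u' +
      toEuclideanCLM (n := n) (𝕜 := 𝕜) P₀ (toEuclideanCLM (n := n) (𝕜 := 𝕜) H x)) :
    u' = s • toEuclideanCLM (n := n) (𝕜 := 𝕜) (P₁⁻¹ * H⁻¹) (toEuclideanCLM (n := n) (𝕜 := 𝕜) H x)
      - toEuclideanCLM (n := n) (𝕜 := 𝕜) (P₁⁻¹ * P₀) (toEuclideanCLM (n := n) (𝕜 := 𝕜) H x) := by
  have hinv {A : Matrix n n 𝕜} (hA : IsUnit A) (y) :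
      toEuclideanCLM (n := n) (𝕜 := 𝕜) A⁻¹ (toEuclideanCLM (n := n) (𝕜 := 𝕜) A y) = y := by
    rw [← mul_apply_eq_comp, ← map_mul, nonsing_inv_mul _ ((isUnit_iff_isUnit_det A).1 hA),
      map_one, one_apply_eq_self]
  rw [← hinv hP₁ u', eq_sub_of_add_eq h.symm]
  simp only [map_mul, mul_apply_eq_comp, map_sub, map_smul, hinv hH]

end Matrix

local notation "𝐓" => toEuclideanCLM (n := Fin _) (𝕜 := ℂ)

section PortHamiltonian

variable {d : ℕ}

/-- The coefficient `B` of the equation `w' = s • Δ⁻¹ w + B w` satisfied by `w = Rᴴ 𝓗 x` along a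
classical solution `x`. -/
noncomputable def couplingMatrix (P₁ P₀ : Matrix (Fin d) (Fin d) ℂ)
    (S R : ℝ → Matrix (Fin d) (Fin d) ℂ) (t : ℝ) : Matrix (Fin d) (Fin d) ℂ :=
  (of fun i j => derivWithin (fun τ => R τ i j) (Icc 0 1) t)ᴴ * (S t)ᴴ -
    (R t)ᴴ * (P₁⁻¹ * P₀) * (S t)ᴴ

theorem continuousOn_toEuclideanCLM_couplingMatrix (P₁ P₀ : Matrix (Fin d) (Fin d) ℂ)
    {S R : ℝ → Matrix (Fin d) (Fin d) ℂ} (hS : ∀ i j, ContinuousOn (fun t => S t i j) (Icc 0 1))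
    (hR : ∀ i j, ContDiffOn ℝ 1 (fun t => R t i j) (Icc 0 1)) :
    ContinuousOn (fun t => 𝐓 (couplingMatrix P₁ P₀ S R t)) (Icc 0 1) := by
  have hconj {A : ℝ → Matrix (Fin d) (Fin d) ℂ}
      (hA : ∀ i j, ContinuousOn (fun t => A t i j) (Icc 0 1)) :
      ContinuousOn (fun t => 𝐓 (A t)ᴴ) (Icc 0 1) :=
    continuous_toEuclideanCLM.comp_continuousOn <|
      continuous_id.matrix_conjTranspose.comp_continuousOn
        (continuousOn_pi.2 fun i => continuousOn_pi.2 (hA i))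
  have hR' := hconj fun i j =>
    (hR i j).continuousOn_derivWithin (uniqueDiffOn_Icc zero_lt_one) le_rfl
  simp only [couplingMatrix, map_sub, map_mul]
  exact (hR'.mul (hconj hS)).sub
    (((hconj fun i j => (hR i j).continuousOn).mul continuousOn_const).mul (hconj hS))

theorem IsClassicalSolution.hasDerivWithinAt_conjTranspose_apply
    {P₁ P₀ : Matrix (Fin d) (Fin d) ℂ} {𝓗 S R Δ : ℝ → Matrix (Fin d) (Fin d) ℂ} {s : ℂ}
    {x : ℝ → EuclideanSpace ℂ (Fin d)} (hx : IsClassicalSolution P₁ P₀ 𝓗 s x)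
    (hP₁ : P₁.IsHermitian) (hP₁inv : IsUnit P₁) (h𝓗 : ∀ t ∈ Icc (0:ℝ) 1, (𝓗 t).PosDef)
    (hR : ∀ i j, ContDiffOn ℝ 1 (fun t => R t i j) (Icc 0 1))
    (hRS : ∀ t ∈ Icc (0:ℝ) 1, R t * S t = 1 ∧ S t * R t = 1)
    (hΔ : ∀ t ∈ Icc (0:ℝ) 1, (Δ t).IsHermitian)
    (hfact : ∀ t ∈ Icc (0:ℝ) 1, P₁ * 𝓗 t = R t * Δ t * S t) {t : ℝ} (ht : t ∈ Icc (0:ℝ) 1) :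
    HasDerivWithinAt (fun τ => 𝐓 (R τ)ᴴ (𝐓 (𝓗 τ) (x τ)))
      (s • 𝐓 (Δ t)⁻¹ (𝐓 (R t)ᴴ (𝐓 (𝓗 t) (x t))) +
        𝐓 (couplingMatrix P₁ P₀ S R t) (𝐓 (R t)ᴴ (𝐓 (𝓗 t) (x t)))) (Icc 0 1) t := by
  obtain ⟨u', -, hu', hux⟩ := hx
  have hu : HasDerivWithinAt (fun τ => 𝐓 (𝓗 τ) (x τ)) (u' t) (Icc 0 1) t := hu' t ht
  have hxu : s • x t = 𝐓 P₁ (u' t) + 𝐓 P₀ (𝐓 (𝓗 t) (x t)) := hux t ht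
  have hR' (i j : Fin d) : HasDerivWithinAt (fun τ => (R τ)ᴴ i j)
      ((of fun i j => derivWithin (fun τ => R τ i j) (Icc 0 1) t)ᴴ i j) (Icc 0 1) t :=
    ((hR j i).differentiableOn one_ne_zero t ht).hasDerivWithinAt.star
  have hSR : 𝐓 (S t)ᴴ * 𝐓 (R t)ᴴ = 1 := by
    rw [← map_mul, ← conjTranspose_mul, (hRS t ht).1, conjTranspose_one, map_one]
  refine (hasDerivWithinAt_toEuclideanCLM_apply hR' hu).congr_deriv ?_
  rw [ContinuousLinearMap.apply_add_apply_eq_smul_add hSR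
    (toEuclideanCLM_apply_eq_smul_sub hP₁inv (h𝓗 t ht).isUnit hxu)]
  simp only [← map_mul, ← map_sub]
  rw [conjTranspose_mul_inv_mul_inv_mul_conjTranspose hP₁ (h𝓗 t ht).isHermitian (hΔ t ht)
      (hRS t ht).1 (hRS t ht).2 (hfact t ht)]
  rfl

theorem norm_toEuclideanCLM_mul_fundamental_le {P₁ P₀ : Matrix (Fin d) (Fin d) ℂ}
    {𝓗 S R Δ : ℝ → Matrix (Fin d) (Fin d) ℂ} {Ψ : ℂ → ℝ → Matrix (Fin d) (Fin d) ℂ}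
    (hP₁ : P₁.IsHermitian) (hP₁inv : IsUnit P₁) (h𝓗 : ∀ t ∈ Icc (0:ℝ) 1, (𝓗 t).PosDef)
    (hR : ∀ i j, ContDiffOn ℝ 1 (fun t => R t i j) (Icc 0 1))
    (hRS : ∀ t ∈ Icc (0:ℝ) 1, R t * S t = 1 ∧ S t * R t = 1)
    (hΔ : ∀ t ∈ Icc (0:ℝ) 1, (Δ t).IsHermitian)
    (hfact : ∀ t ∈ Icc (0:ℝ) 1, P₁ * 𝓗 t = R t * Δ t * S t) (hΨ0 : ∀ s : ℂ, Ψ s 0 = 1)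
    (hΨsol : ∀ (s : ℂ) (v : EuclideanSpace ℂ (Fin d)),
      IsClassicalSolution P₁ P₀ 𝓗 s (fun ζ => toEuclideanLin (Ψ s ζ) v))
    {M K : ℝ} (hM : ∀ t ∈ Icc (0:ℝ) 1, ‖𝐓 (Δ t)⁻¹‖ ≤ M)
    (hK : ∀ t ∈ Icc (0:ℝ) 1, ‖𝐓 (couplingMatrix P₁ P₀ S R t)‖ ≤ K) (s : ℂ) :
    ‖𝐓 (𝓗 1 * Ψ s 1)‖ ≤ ‖𝐓 (S 1)ᴴ‖ * ‖𝐓 ((R 0)ᴴ * 𝓗 0)‖ * exp (|s.re| * M + K) := by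
  refine ContinuousLinearMap.opNorm_le_bound _ (by positivity) fun v => ?_
  set w := fun t => 𝐓 (R t)ᴴ (𝐓 (𝓗 t) (𝐓 (Ψ s t) v))
  have hw := norm_le_mul_exp_of_hasDerivWithinAt_smul_add zero_le_one
    (fun t ht => (hΨsol s v).hasDerivWithinAt_conjTranspose_apply hP₁ hP₁inv h𝓗 hR hRS hΔ hfact ht)
    (fun t ht => (hΔ t ht).inv.isSelfAdjoint.map _) hM hK
  have h1 : 𝐓 (𝓗 1 * Ψ s 1) v = 𝐓 (S 1)ᴴ (w 1) := by
    simp only [w, ← mul_apply_eq_comp, ← map_mul, ← mul_assoc, ← conjTranspose_mul,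
      (hRS 1 ⟨zero_le_one, le_rfl⟩).1, conjTranspose_one, one_mul]
  have h0 : w 0 = 𝐓 ((R 0)ᴴ * 𝓗 0) v := by
    simp only [w, hΨ0, map_one, one_apply_eq_self, map_mul, mul_apply_eq_comp]
  rw [sub_zero, mul_one] at hw
  rw [h1]
  calc ‖𝐓 (S 1)ᴴ (w 1)‖ ≤ ‖𝐓 (S 1)ᴴ‖ * ‖w 1‖ := ContinuousLinearMap.le_opNorm _ _
    _ ≤ ‖𝐓 (S 1)ᴴ‖ * (‖w 0‖ * exp (|s.re| * M + K)) := by gcongr; exact hw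
    _ ≤ ‖𝐓 (S 1)ᴴ‖ * (‖𝐓 ((R 0)ᴴ * 𝓗 0)‖ * ‖v‖ * exp (|s.re| * M + K)) := by
        rw [h0]
        gcongr
        exact ContinuousLinearMap.le_opNorm _ _
    _ = _ := by ring

theorem exists_norm_toEuclideanCLM_mul_fundamental_le {P₁ P₀ : Matrix (Fin d) (Fin d) ℂ}
    {𝓗 S R Δ : ℝ → Matrix (Fin d) (Fin d) ℂ} {Ψ : ℂ → ℝ → Matrix (Fin d) (Fin d) ℂ}
    (hP₁ : P₁.IsHermitian) (hP₁inv : IsUnit P₁) (h𝓗 : ∀ t ∈ Icc (0:ℝ) 1, (𝓗 t).PosDef)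
    (hS : ∀ i j, ContinuousOn (fun t => S t i j) (Icc 0 1))
    (hR : ∀ i j, ContDiffOn ℝ 1 (fun t => R t i j) (Icc 0 1))
    (hΔ : ∀ i j, ContinuousOn (fun t => Δ t i j) (Icc 0 1))
    (hRS : ∀ t ∈ Icc (0:ℝ) 1, R t * S t = 1 ∧ S t * R t = 1)
    (hΔherm : ∀ t ∈ Icc (0:ℝ) 1, (Δ t).IsHermitian) (hΔinv : ∀ t ∈ Icc (0:ℝ) 1, IsUnit (Δ t))
    (hfact : ∀ t ∈ Icc (0:ℝ) 1, P₁ * 𝓗 t = R t * Δ t * S t) (hΨ0 : ∀ s : ℂ, Ψ s 0 = 1)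
    (hΨsol : ∀ (s : ℂ) (v : EuclideanSpace ℂ (Fin d)),
      IsClassicalSolution P₁ P₀ 𝓗 s (fun ζ => toEuclideanLin (Ψ s ζ) v)) :
    ∃ C M : ℝ, 0 ≤ C ∧ 0 ≤ M ∧ ∀ s : ℂ, ‖𝐓 (𝓗 1 * Ψ s 1)‖ ≤ C * exp (M * |s.re|) := by
  obtain ⟨M, hM⟩ := isCompact_Icc.exists_bound_of_continuousOn <|
    continuous_toEuclideanCLM.comp_continuousOn <|
      (continuousOn_pi.2 fun i => continuousOn_pi.2 (hΔ i)).matrix_inv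
        fun t ht => ((isUnit_iff_isUnit_det _).1 (hΔinv t ht)).ne_zero
  obtain ⟨K, hK⟩ := isCompact_Icc.exists_bound_of_continuousOn <|
    continuousOn_toEuclideanCLM_couplingMatrix P₁ P₀ hS hR
  refine ⟨‖𝐓 (S 1)ᴴ‖ * ‖𝐓 ((R 0)ᴴ * 𝓗 0)‖ * exp K, M, by positivity,
    (norm_nonneg _).trans (hM 0 ⟨le_rfl, zero_le_one⟩), fun s => ?_⟩
  refine (norm_toEuclideanCLM_mul_fundamental_le hP₁ hP₁inv h𝓗 hR hRS hΔherm hfact hΨ0 hΨsol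
    hM hK s).trans_eq ?_
  rw [exp_add]
  ring_nf

end PortHamiltonian

theorem det_characteristic_function_exponential_bound_general
    (d : ℕ)
    (P₁ P₀ : Matrix (Fin d) (Fin d) ℂ)
    (hP₁herm : P₁.IsHermitian) (hP₁inv : IsUnit P₁)
    (𝓗 : ℝ → Matrix (Fin d) (Fin d) ℂ)
    (h𝓗pos : ∀ ζ ∈ Set.Icc (0:ℝ) 1, (𝓗 ζ).PosDef)
    (S R Δ : ℝ → Matrix (Fin d) (Fin d) ℂ)
    (hS : ∀ i j, ContDiffOn ℝ 1 (fun ζ => S ζ i j) (Set.Icc 0 1))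
    (hR : ∀ i j, ContDiffOn ℝ 1 (fun ζ => R ζ i j) (Set.Icc 0 1))
    (hΔ : ∀ i j, ContDiffOn ℝ 1 (fun ζ => Δ ζ i j) (Set.Icc 0 1))
    (hRS : ∀ ζ ∈ Set.Icc (0:ℝ) 1, R ζ * S ζ = 1 ∧ S ζ * R ζ = 1)
    (hΔdiag : ∀ ζ ∈ Set.Icc (0:ℝ) 1, (Δ ζ).IsDiag)
    (hΔreal : ∀ ζ ∈ Set.Icc (0:ℝ) 1, ∀ i, (Δ ζ i i).im = 0)
    (hΔinv : ∀ ζ ∈ Set.Icc (0:ℝ) 1, IsUnit (Δ ζ))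
    (hfact : ∀ ζ ∈ Set.Icc (0:ℝ) 1, P₁ * 𝓗 ζ = R ζ * Δ ζ * S ζ)
    (W₁ W₀ : Matrix (Fin d) (Fin d) ℂ)
    -- `Ψ` is the fundamental solution of the eigenvalue ODE
    (Ψ : ℂ → ℝ → Matrix (Fin d) (Fin d) ℂ)
    (hΨ0 : ∀ s : ℂ, Ψ s 0 = 1)
    (hΨsol : ∀ (s : ℂ) (v : EuclideanSpace ℂ (Fin d)),
      IsClassicalSolution P₁ P₀ 𝓗 s (fun ζ => Matrix.toEuclideanLin (Ψ s ζ) v)) :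
    ∃ c₂ c₃ : ℝ, 0 ≤ c₂ ∧ 0 ≤ c₃ ∧
      ∀ s : ℂ,
        ‖(W₁ * 𝓗 1 * Ψ s 1 + W₀ * 𝓗 0).det‖ ≤ c₂ * Real.exp (c₃ * |s.re|) := by
  obtain ⟨C, M, hC, hM, hΨbound⟩ := exists_norm_toEuclideanCLM_mul_fundamental_le hP₁herm hP₁inv
    h𝓗pos (fun i j => (hS i j).continuousOn) hR (fun i j => (hΔ i j).continuousOn) hRS
    (fun t ht => (hΔdiag t ht).isHermitian_of_im_eq_zero (hΔreal t ht)) hΔinv hfact hΨ0 hΨsol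
  set c := ‖𝐓 W₁‖ * C + ‖𝐓 (W₀ * 𝓗 0)‖
  refine ⟨d ! * c ^ d, d * M, by positivity, by positivity, fun s => ?_⟩
  have hnorm : ‖𝐓 (W₁ * 𝓗 1 * Ψ s 1 + W₀ * 𝓗 0)‖ ≤ c * exp (M * |s.re|) := by
    have hexp : 1 ≤ exp (M * |s.re|) := one_le_exp (by positivity)
    rw [map_add, mul_assoc, map_mul]
    calc _ ≤ ‖𝐓 W₁‖ * ‖𝐓 (𝓗 1 * Ψ s 1)‖ + ‖𝐓 (W₀ * 𝓗 0)‖ * 1 := by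
          grw [norm_add_le, norm_mul_le, mul_one]
      _ ≤ ‖𝐓 W₁‖ * (C * exp (M * |s.re|)) + ‖𝐓 (W₀ * 𝓗 0)‖ * exp (M * |s.re|) := by
          grw [hΨbound s, hexp]
      _ = c * exp (M * |s.re|) := by ring
  calc _ ≤ d ! * ‖𝐓 (W₁ * 𝓗 1 * Ψ s 1 + W₀ * 𝓗 0)‖ ^ d := by
        simpa using norm_det_le_factorial_mul_norm_toEuclideanCLM_pow (W₁ * 𝓗 1 * Ψ s 1 + W₀ * 𝓗 0)
    _ ≤ d ! * (c * exp (M * |s.re|)) ^ d := by gcongr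
    _ = d ! * c ^ d * exp (d * M * |s.re|) := by
        rw [mul_pow, ← exp_nat_mul]
        ring_nf

/-- Exponential-type bound for the characteristic function
`g(s) = det (W₁·𝓗(1)·Ψˢ(1) + W₀·𝓗(0))`: there are constants `c₂, c₃ ≥ 0` with
`|g(s)| ≤ c₂·e^{c₃·|Re s|}` for all `s ∈ ℂ`. -/
theorem det_characteristic_function_exponential_bound
    (d : ℕ) (hd : 1 ≤ d)
    (P₁ P₀ : Matrix (Fin d) (Fin d) ℂ)
    (hP₁herm : P₁.IsHermitian) (hP₁inv : IsUnit P₁)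
    (hP₀skew : P₀ᴴ = -P₀)
    (𝓗 : ℝ → Matrix (Fin d) (Fin d) ℂ)
    (h𝓗cont : ContinuousOn 𝓗 (Set.Icc 0 1))
    (h𝓗pos : ∀ ζ ∈ Set.Icc (0:ℝ) 1, (𝓗 ζ).PosDef)
    (S R Δ : ℝ → Matrix (Fin d) (Fin d) ℂ)
    (hS : ∀ i j, ContDiffOn ℝ 1 (fun ζ => S ζ i j) (Set.Icc 0 1))
    (hR : ∀ i j, ContDiffOn ℝ 1 (fun ζ => R ζ i j) (Set.Icc 0 1))
    (hΔ : ∀ i j, ContDiffOn ℝ 1 (fun ζ => Δ ζ i j) (Set.Icc 0 1))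
    (hRS : ∀ ζ ∈ Set.Icc (0:ℝ) 1, R ζ * S ζ = 1 ∧ S ζ * R ζ = 1)
    (hΔdiag : ∀ ζ ∈ Set.Icc (0:ℝ) 1, (Δ ζ).IsDiag)
    (hΔreal : ∀ ζ ∈ Set.Icc (0:ℝ) 1, ∀ i, (Δ ζ i i).im = 0)
    (hΔinv : ∀ ζ ∈ Set.Icc (0:ℝ) 1, IsUnit (Δ ζ))
    (hfact : ∀ ζ ∈ Set.Icc (0:ℝ) 1, P₁ * 𝓗 ζ = R ζ * Δ ζ * S ζ)
    (W₁ W₀ : Matrix (Fin d) (Fin d) ℂ)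
    -- `Ψ` is the fundamental solution of the eigenvalue ODE
    (Ψ : ℂ → ℝ → Matrix (Fin d) (Fin d) ℂ)
    (hΨ0 : ∀ s : ℂ, Ψ s 0 = 1)
    (hΨsol : ∀ (s : ℂ) (v : EuclideanSpace ℂ (Fin d)),
      IsClassicalSolution P₁ P₀ 𝓗 s (fun ζ => Matrix.toEuclideanLin (Ψ s ζ) v)) :
    ∃ c₂ c₃ : ℝ, 0 ≤ c₂ ∧ 0 ≤ c₃ ∧
      ∀ s : ℂ,
        ‖(W₁ * 𝓗 1 * Ψ s 1 + W₀ * 𝓗 0).det‖ ≤ c₂ * Real.exp (c₃ * |s.re|) :=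
  det_characteristic_function_exponential_bound_general d P₁ P₀ hP₁herm hP₁inv 𝓗 h𝓗pos S R Δ hS hR
    hΔ hRS hΔdiag hΔreal hΔinv hfact W₁ W₀ Ψ hΨ0 hΨsol
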